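/- arXiv:2511.07431 — 2 statements merged into one kernel-verified Lean document; each statement's English description precedes it below -/
import Mathlib

section
/- In the perpetual-regular-transfers model, for initial capital x ≤ x*, the expected discounted value of perpetual transfers equals D(x) = b(x*/δ − x/(δ + λ(1−μ))). Equivalently, D(x) = (b x*/δ)·(λ(1−μ)/(δ+λ(1−μ))) + (b/(δ+λ(1−μ)))·(x* − x). -/
/-- Closed form for the expected discounted perpetual regular transfers for x ≤ x*. -/
theorem stmt_3 (b lam del mu xs x : ℝ)
    (hb : 0 < b) (hlam : 0 < lam) (hdel : 0 < del)
    (hmu : mu ∈ Set.Ioo (0:ℝ) 1)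
    (hxs : 0 < xs) (hx : 0 ≤ x) (hxle : x ≤ xs) :
    (∑' n : ℕ, b * (xs - x * mu ^ n) * (lam/(lam+del)) ^ n * (1/(lam+del)))
      = b * (xs/del - x/(del + lam*(1-mu)))
    ∧ b * (xs/del - x/(del + lam*(1-mu)))
      = (b*xs/del) * (lam*(1-mu)/(del+lam*(1-mu)))
        + (b/(del+lam*(1-mu))) * (xs - x) := by
  obtain ⟨hmu0, hmu1⟩ := hmu
  have hld : (0:ℝ) < lam + del := by linarith
  have hD : (0:ℝ) < del + lam*(1-mu) := by nlinarith
  set r : ℝ := lam/(lam+del) with hr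
  have hr0 : 0 ≤ r := by positivity
  have hr1 : r < 1 := by
    rw [hr, div_lt_one hld]; linarith
  have hmr0 : 0 ≤ mu * r := by positivity
  have hmr1 : mu * r < 1 := by nlinarith
  have hs1 : Summable (fun n : ℕ => r ^ n) := summable_geometric_of_lt_one hr0 hr1
  have hs2 : Summable (fun n : ℕ => (mu*r) ^ n) := summable_geometric_of_lt_one hmr0 hmr1
  constructor
  · have heq : (fun n : ℕ => b * (xs - x * mu ^ n) * r ^ n * (1/(lam+del)))
        = fun n : ℕ => (b*xs/(lam+del)) * r ^ n - (b*x/(lam+del)) * (mu*r) ^ n := by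
      funext n; rw [mul_pow]; ring
    rw [heq, Summable.tsum_sub (hs1.mul_left _) (hs2.mul_left _),
      tsum_mul_left, tsum_mul_left, tsum_geometric_of_lt_one hr0 hr1,
      tsum_geometric_of_lt_one hmr0 hmr1, hr]
    have h1 : 1 - lam/(lam+del) = del/(lam+del) := by field_simp; ring
    have h2 : 1 - mu * (lam/(lam+del)) = (del + lam*(1-mu))/(lam+del) := by
      field_simp; ring
    rw [h1, h2]
    field_simp
  · field_simp
    ring
end

section
/- In the uncontrolled capital model with growth rate r > 0 above the poverty line x*, if the capital starts at x > x* and the first loss occurs at time τ₁ with remaining proportion Z₁ ∈ (0,1), then the post-loss capital satisfies X_{τ₁} = ((x−x*)e^{rτ₁}+x*)·Z₁ ≥ (x−x*)e^{rτ₁}·Z₁, and by induction, on the event that the capital has remained above x* through the first k losses, X_{τ_k} ≥ (x−x*)e^{rτ_k}·Z₁Z₂⋯Z_k − (k−1)x*e^{r(τ_k−τ₁)}. -/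
/-- Lower bounds for the uncontrolled capital process after the first k losses. -/
theorem stmt_10 (r xs x : ℝ) (hr : 0 < r) (hxs : 0 < xs) (hx : xs < x)
    (Z τ : ℕ → ℝ) (hZ : ∀ i, Z i ∈ Set.Ioo (0:ℝ) 1)
    (hτ0 : τ 0 = 0) (hτmono : ∀ i, τ i ≤ τ (i+1)) (hτ1 : 0 < τ 1)
    (X : ℕ → ℝ) (hX0 : X 0 = x)
    (hrec : ∀ k, X (k+1)
      = ((X k - xs) * Real.exp (r * (τ (k+1) - τ k)) + xs) * Z (k+1)) :
    (X 1 = ((x - xs) * Real.exp (r * τ 1) + xs) * Z 1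
      ∧ (x - xs) * Real.exp (r * τ 1) * Z 1 ≤ X 1)
    ∧ ∀ k, 1 ≤ k → (∀ j, j < k → xs < X j) →
      (x - xs) * Real.exp (r * τ k) * (∏ i ∈ Finset.Icc 1 k, Z i)
        - ((k:ℝ) - 1) * xs * Real.exp (r * (τ k - τ 1)) ≤ X k := by
  have hτle : ∀ k, 1 ≤ k → τ 1 ≤ τ k := by
    intro k hk
    induction k, hk using Nat.le_induction with
    | base => exact le_refl _
    | succ n hn ih => exact ih.trans (hτmono n)
  have hX1 : X 1 = ((x - xs) * Real.exp (r * τ 1) + xs) * Z 1 := by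
    have h := hrec 0
    rw [hX0, hτ0, sub_zero] at h
    exact h
  have h1 : (x - xs) * Real.exp (r * τ 1) * Z 1 ≤ X 1 := by
    rw [hX1]
    nlinarith [mul_pos hxs (hZ 1).1]
  have main : ∀ k, 1 ≤ k →
      (x - xs) * Real.exp (r * τ k) * (∏ i ∈ Finset.Icc 1 k, Z i)
        - ((k:ℝ) - 1) * xs * Real.exp (r * (τ k - τ 1)) ≤ X k := by
    intro k hk
    induction k, hk using Nat.le_induction with
    | base =>
      simp only [Finset.Icc_self, Finset.prod_singleton, Nat.cast_one, sub_self,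
        zero_mul, sub_zero]
      exact h1
    | succ n hn ih =>
      have hprod : (∏ i ∈ Finset.Icc 1 (n+1), Z i)
          = (∏ i ∈ Finset.Icc 1 n, Z i) * Z (n+1) :=
        Finset.prod_Icc_succ_top (by omega) Z
      have hPpos : 0 < ∏ i ∈ Finset.Icc 1 n, Z i :=
        Finset.prod_pos fun i _ => (hZ i).1
      have hZn := hZ (n+1)
      set E := Real.exp (r * (τ (n+1) - τ n)) with hE
      have hEpos : 0 < E := Real.exp_pos _
      have hab : Real.exp (r * τ n) * E = Real.exp (r * τ (n+1)) := by
        rw [hE, ← Real.exp_add]; ring_nf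
      have hcb : Real.exp (r * (τ n - τ 1)) * E
          = Real.exp (r * (τ (n+1) - τ 1)) := by
        rw [hE, ← Real.exp_add]; ring_nf
      have hEle : E ≤ Real.exp (r * (τ (n+1) - τ 1)) := by
        rw [hE]
        apply Real.exp_le_exp.mpr
        have := hτle n hn
        nlinarith
      have hrn := hrec n
      rw [← hE] at hrn
      -- X (n+1) = (X n - xs) * E * Z (n+1) + xs * Z (n+1)
      set P := ∏ i ∈ Finset.Icc 1 n, Z i with hP
      set A := (x - xs) * Real.exp (r * τ n) * P
        - ((n:ℝ) - 1) * xs * Real.exp (r * (τ n - τ 1)) with hA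
      have step1 : (A - xs) * E * Z (n+1) ≤ X (n+1) := by
        rw [hrn]
        have h2 : (A - xs) * E ≤ (X n - xs) * E := by
          apply mul_le_mul_of_nonneg_right _ hEpos.le
          linarith [ih]
        calc (A - xs) * E * Z (n+1) ≤ (X n - xs) * E * Z (n+1) :=
              mul_le_mul_of_nonneg_right h2 hZn.1.le
          _ ≤ ((X n - xs) * E + xs) * Z (n+1) := by
              nlinarith [mul_pos hxs hZn.1]
      have key : (x - xs) * Real.exp (r * τ (n+1)) * (P * Z (n+1))
          - ((n:ℝ) + 1 - 1) * xs * Real.exp (r * (τ (n+1) - τ 1))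
          ≤ (A - xs) * E * Z (n+1) := by
        have expand : (A - xs) * E * Z (n+1)
            = (x - xs) * (Real.exp (r * τ n) * E) * (P * Z (n+1))
              - ((n:ℝ) - 1) * xs * (Real.exp (r * (τ n - τ 1)) * E) * Z (n+1)
              - xs * (E * Z (n+1)) := by
          rw [hA]; ring
        rw [expand, hab, hcb]
        have hn1 : (1:ℝ) ≤ (n:ℝ) := by exact_mod_cast hn
        have hd : 0 < Real.exp (r * (τ (n+1) - τ 1)) := Real.exp_pos _
        have t1 : ((n:ℝ) - 1) * xs * Real.exp (r * (τ (n+1) - τ 1)) * Z (n+1)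
            ≤ ((n:ℝ) - 1) * xs * Real.exp (r * (τ (n+1) - τ 1)) := by
          nlinarith [mul_nonneg (mul_nonneg (by linarith : (0:ℝ) ≤ (n:ℝ) - 1) hxs.le) hd.le,
            mul_nonneg (mul_nonneg (mul_nonneg (by linarith : (0:ℝ) ≤ (n:ℝ) - 1) hxs.le) hd.le)
              (by linarith [hZn.2] : (0:ℝ) ≤ 1 - Z (n+1))]
        have t2 : xs * (E * Z (n+1)) ≤ xs * Real.exp (r * (τ (n+1) - τ 1)) := by
          have : E * Z (n+1) ≤ Real.exp (r * (τ (n+1) - τ 1)) := by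
            nlinarith [hZn.2, hZn.1]
          exact mul_le_mul_of_nonneg_left this hxs.le
        push_cast
        linarith
      rw [hprod]
      push_cast
      calc (x - xs) * Real.exp (r * τ (n+1)) * (P * Z (n+1))
            - ((n:ℝ) + 1 - 1) * xs * Real.exp (r * (τ (n+1) - τ 1))
          ≤ (A - xs) * E * Z (n+1) := key
        _ ≤ X (n+1) := step1
  exact ⟨⟨hX1, h1⟩, fun k hk _ => main k hk⟩
end
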